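/- Every null Yang–Mills field F_{μν} is 0-universal: every g-valued 1-form constructed polynomially from F and ⋆F that is at least quadratic in F vanishes identically. Consequently, a null Yang–Mills field solves the field equations of any gauge theory whose Lagrangian is the Yang–Mills Lagrangian plus an analytic function of algebraic scalar gauge invariants of F and ⋆F whose expansion is at least cubic in F. -/

import Mathlib

noncomputable section

open scoped BigOperators

/-!  ### Frame-component formalism for gauge covariant fields

We work on a `d`-dimensional Lorentzian spacetime (`4 ≤ d`) whose points form a type `M`,
equipped with a fixed null frame `{e₍₀₎ = ℓ, e₍₁₎ = n, e₍ᵢ₎ = m₍ᵢ₎}` (`i = 2, …, d−1`):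
`ℓ, n` are null with `ℓ_μ n^μ = 1`, the `m₍ᵢ₎` are orthonormal spacelike and orthogonal to
`ℓ, n`.  Every tensorial quantity is recorded through its frame components; in all
alignment-related notions the distinguished aligned null direction is the frame vector
`ℓ` (frame index `0`).  Lie algebra valued (gauge covariant) fields take values in a
matrix Lie algebra `𝔤 ⊆ 𝔤𝔩(N, ℂ)`. -/

/-- (Complex) tensor fields of rank `r`, recorded by their null-frame components. -/
def TensorField (M : Type) (d r : ℕ) : Type :=
  M → (Fin r → Fin d) → ℂ

/-- Lie-algebra valued (gauge covariant) tensor fields of rank `r`, recorded by their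
null-frame components; the gauge Lie algebra is realized as matrices in `𝔤𝔩(N, ℂ)`. -/
def GTensorField (M : Type) (d r N : ℕ) : Type :=
  M → (Fin r → Fin d) → Matrix (Fin N) (Fin N) ℂ

/-- The boost weight of a frame-component index list: the number of `0` (≡ `ℓ`) indices
minus the number of `1` (≡ `n`) indices. -/
def boostWeight {d r : ℕ} (idx : Fin r → Fin d) : ℤ :=
  ((Finset.univ.filter fun i => (idx i : ℕ) = 0).card : ℤ) -
    ((Finset.univ.filter fun i => (idx i : ℕ) = 1).card : ℤ)

/-- Frame components of the Lorentzian metric: `η₀₁ = η₁₀ = 1`, `η_{ii} = 1` (`i ≥ 2`). -/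
def eta (d : ℕ) (a b : Fin d) : ℂ :=
  if ((a : ℕ) = 0 ∧ (b : ℕ) = 1) ∨ ((a : ℕ) = 1 ∧ (b : ℕ) = 0) then 1
  else if a = b ∧ 2 ≤ (a : ℕ) then 1 else 0

/-- Frame components of the volume element (the Levi-Civita symbol). -/
def leviCivita (d : ℕ) (idx : Fin d → Fin d) : ℂ :=
  if h : Function.Bijective idx then ((Equiv.Perm.sign (Equiv.ofBijective idx h) : ℤ) : ℂ)
  else 0

/-- `T` has boost order at most `b` with respect to the fixed frame; for `b` smaller than
the maximal possible boost weight this says that `ℓ` is an aligned null direction of `T`. -/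
def TensorField.BoostOrderLE {M : Type} {d r : ℕ} (T : TensorField M d r) (b : ℤ) : Prop :=
  ∀ x idx, b < boostWeight idx → T x idx = 0

/-- `T` has boost order at most `b` (gauge covariant version). -/
def GTensorField.BoostOrderLE {M : Type} {d r N : ℕ} (T : GTensorField M d r N) (b : ℤ) :
    Prop :=
  ∀ x idx, b < boostWeight idx → T x idx = 0

/-- Algebraic type II aligned with `ℓ`: all positive boost weight parts vanish. -/
def GTensorField.IsTypeII {M : Type} {d r N : ℕ} (T : GTensorField M d r N) : Prop :=
  T.BoostOrderLE 0

/-- Algebraic type III aligned with `ℓ`: all boost weight `b ≥ 0` parts vanish. -/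
def GTensorField.IsTypeIII {M : Type} {d r N : ℕ} (T : GTensorField M d r N) : Prop :=
  T.BoostOrderLE (-1)

/-- A field strength (rank-2 antisymmetric gauge covariant field) is *null* (type N,
aligned with `ℓ`) iff only its lowest boost weight components `F_{1i}` survive, i.e. its
boost order is at most `-1`. -/
def GTensorField.IsNull {M : Type} {d N : ℕ} (F : GTensorField M d 2 N) : Prop :=
  F.BoostOrderLE (-1)

/-- The boost weight `b` part of a gauge covariant quantity (frame components). -/
def bwPart {M : Type} {d r N : ℕ} (b : ℤ) (T : GTensorField M d r N) : GTensorField M d r N :=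
  fun x idx => if boostWeight idx = b then T x idx else 0

/-- The trace over the gauge Lie algebra, producing an ordinary tensor field. -/
def traceField {M : Type} {d r N : ℕ} (T : GTensorField M d r N) : TensorField M d r :=
  fun x idx => Matrix.trace (T x idx)

/-- Pointwise (matrix ⊗ tensor) product of gauge covariant fields. -/
def gprod {M : Type} {d r s N : ℕ} (T : GTensorField M d r N) (U : GTensorField M d s N) :
    GTensorField M d (r + s) N :=
  fun x idx => T x (fun i => idx (Fin.castAdd s i)) * U x (fun j => idx (Fin.natAdd r j))

/-- Metric contraction of the first two indices of a gauge covariant field. -/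
def contr2 {M : Type} {d r N : ℕ} (T : GTensorField M d (r + 2) N) : GTensorField M d r N :=
  fun x idx => ∑ a : Fin d, ∑ b : Fin d, eta d a b • T x (Fin.cons a (Fin.cons b idx))

/-- Permutation of the indices of a gauge covariant field. -/
def permIdx {M : Type} {d r N : ℕ} (σ : Equiv.Perm (Fin r)) (T : GTensorField M d r N) :
    GTensorField M d r N :=
  fun x idx => T x (idx ∘ σ)

/-- Transport of a gauge covariant field along an equality of ranks. -/
def castRank {M : Type} {d N : ℕ} {r s : ℕ} (h : r = s) (T : GTensorField M d r N) :
    GTensorField M d s N :=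
  fun x idx => T x (fun i => idx (Fin.cast h i))

private def contrIterAux {M : Type} {d N : ℕ} :
    ∀ (m r : ℕ), GTensorField M d (r + 2 * m) N → GTensorField M d r N
  | 0, _, T => T
  | m + 1, r, T => contrIterAux m r (contr2 (r := r + 2 * m) T)

/-- Iterated metric contraction of the `2 m` leading indices, in pairs. -/
def contrIter {M : Type} {d N : ℕ} (m : ℕ) {r : ℕ} (T : GTensorField M d (r + 2 * m) N) :
    GTensorField M d r N :=
  contrIterAux m r T

/-- Pointwise product of ordinary tensor fields. -/
def tensProd {M : Type} {d r s : ℕ} (T : TensorField M d r) (U : TensorField M d s) :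
    TensorField M d (r + s) :=
  fun x idx => T x (fun i => idx (Fin.castAdd s i)) * U x (fun j => idx (Fin.natAdd r j))

/-- Metric contraction of the first two indices of an ordinary tensor field. -/
def tcontr2 {M : Type} {d r : ℕ} (T : TensorField M d (r + 2)) : TensorField M d r :=
  fun x idx => ∑ a : Fin d, ∑ b : Fin d, eta d a b * T x (Fin.cons a (Fin.cons b idx))

/-- The geometric data of the spacetime in the fixed null frame: the Levi-Civita
covariant derivative (frame components, derivative index first) acting on ordinary and
on Lie-algebra valued tensor fields, the covariant derivative of the frame vector `ℓ`,
and the curvature tensors. -/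
structure Spacetime (M : Type) (d : ℕ) where
  /-- the Levi-Civita covariant derivative on ordinary tensor fields -/
  nablaR : ∀ {r : ℕ}, TensorField M d r → TensorField M d (r + 1)
  /-- the Levi-Civita covariant derivative on Lie-algebra valued tensor fields -/
  nabla : ∀ {r N : ℕ}, GTensorField M d r N → GTensorField M d (r + 1) N
  /-- `∇` commutes with the trace over the gauge Lie algebra -/
  nabla_trace : ∀ {r N : ℕ} (H : GTensorField M d r N),
    nablaR (traceField H) = traceField (nabla H)
  /-- frame components `L_{ab} = e₍ₐ₎^μ e₍b₎^ν ∇_ν ℓ_μ` of the covariant derivative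
  of the frame vector `ℓ`; in particular `κ_i = L_{i0}` and the optical matrix is
  `ρ_{ij} = L_{ij}` (`i, j ≥ 2`). -/
  gradEll : M → Fin d → Fin d → ℂ
  /-- the Riemann tensor -/
  Riem : TensorField M d 4
  /-- the Weyl tensor -/
  Weyl : TensorField M d 4
  /-- the Ricci tensor -/
  Ricci : TensorField M d 2
  /-- the Ricci scalar -/
  ricciScalar : M → ℂ
  /-- the fixed null frame is parallelly propagated along `ℓ` (`Dn = 0`, `Dm₍ᵢ₎ = 0`)
  and `ℓ` is an affinely parameterized geodesic vector field whenever it is geodesic -/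
  parallelFrame : Prop

namespace Spacetime

variable {M : Type} {d : ℕ}

private def nablaRIterAux (G : Spacetime M d) :
    ∀ (m r : ℕ), TensorField M d r → TensorField M d (r + m)
  | 0, _, T => T
  | m + 1, r, T => G.nablaR (G.nablaRIterAux m r T)

/-- Iterated covariant derivative `∇^m` on ordinary tensor fields. -/
def nablaRIter (G : Spacetime M d) (m : ℕ) {r : ℕ} (T : TensorField M d r) :
    TensorField M d (r + m) :=
  G.nablaRIterAux m r T

/-- The directional covariant derivative `D = ℓ^μ ∇_μ` on Lie-algebra valued fields. -/
def DN [NeZero d] (G : Spacetime M d) {r N : ℕ} (T : GTensorField M d r N) :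
    GTensorField M d r N :=
  fun x idx => G.nabla T x (Fin.cons 0 idx)

/-- `ℓ` is geodesic: `κ_i = L_{i0} = 0`. -/
def EllGeodesic [NeZero d] (G : Spacetime M d) : Prop :=
  ∀ x (i : Fin d), 2 ≤ (i : ℕ) → G.gradEll x i 0 = 0

/-- `ℓ` has vanishing expansion, shear and twist: the optical matrix `ρ_{ij}` vanishes. -/
def EllNonExpanding (G : Spacetime M d) : Prop :=
  ∀ x (i j : Fin d), 2 ≤ (i : ℕ) → 2 ≤ (j : ℕ) → G.gradEll x i j = 0

/-- Kundt spacetime: the (frame) null vector field `ℓ` is geodesic with vanishing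
expansion, shear and twist (a Kundt vector). -/
def IsKundt [NeZero d] (G : Spacetime M d) : Prop :=
  G.EllGeodesic ∧ G.EllNonExpanding

/-- Degenerate Kundt spacetime: Kundt, and the Riemann tensor together with all its
covariant derivatives are of type II aligned with the Kundt vector `ℓ`. -/
def IsDegenerateKundt [NeZero d] (G : Spacetime M d) : Prop :=
  G.IsKundt ∧ ∀ m : ℕ, (G.nablaRIter m G.Riem).BoostOrderLE 0

/-- The traceless part of the Ricci tensor. -/
def tracelessRicci (G : Spacetime M d) : TensorField M d 2 :=
  fun x idx => G.Ricci x idx - (G.ricciScalar x / (d : ℂ)) * eta d (idx 0) (idx 1)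

/-- The Weyl tensor is of type III aligned with `ℓ`. -/
def WeylTypeIII (G : Spacetime M d) : Prop := G.Weyl.BoostOrderLE (-1)

/-- The traceless Ricci tensor is of type III aligned with `ℓ`. -/
def TracelessRicciTypeIII (G : Spacetime M d) : Prop := G.tracelessRicci.BoostOrderLE (-1)

/-- The Weyl tensor is of type N aligned with `ℓ`. -/
def WeylTypeN (G : Spacetime M d) : Prop := G.Weyl.BoostOrderLE (-2)

/-- The traceless Ricci tensor is of type N aligned with `ℓ`. -/
def TracelessRicciTypeN (G : Spacetime M d) : Prop := G.tracelessRicci.BoostOrderLE (-2)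

/-- A gauge covariant quantity all whose Lie algebra components are aligned `k`-balanced
*tensors*: only boost weight `b < -k` parts survive and `D^{-b-k} T_(b) = 0`, where
`D = ℓ^μ ∇_μ` (the frame being parallelly propagated with `ℓ` affinely parameterized). -/
def IsTensorBalanced [NeZero d] (G : Spacetime M d) (k : ℕ) {r N : ℕ}
    (T : GTensorField M d r N) : Prop :=
  ∀ b : ℤ,
    (-(k : ℤ) ≤ b → bwPart b T = fun _ _ => 0) ∧
      (b < -(k : ℤ) → (fun U => G.DN U)^[(-b - k).toNat] (bwPart b T) = fun _ _ => 0)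

end Spacetime

/-- A gauge field on the spacetime `G`, recorded by the frame components
`A_a = A_μ e₍ₐ₎^μ` of the (Lie-algebra valued) gauge potential. -/
structure GaugeSetting (M : Type) (d N : ℕ) (G : Spacetime M d) where
  /-- frame components of the gauge potential `A_μ` -/
  A : M → Fin d → Matrix (Fin N) (Fin N) ℂ

namespace GaugeSetting

variable {M : Type} {d N : ℕ} {G : Spacetime M d}

/-- The gauge covariant derivative `𝒟_μ = ∇_μ - i [A_μ, ·]` (frame components,
derivative index first). -/
def covD (S : GaugeSetting M d N G) {r : ℕ} (T : GTensorField M d r N) :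
    GTensorField M d (r + 1) N :=
  fun x idx =>
    G.nabla T x idx -
      Complex.I •
        (S.A x (idx 0) * T x (fun i => idx i.succ) - T x (fun i => idx i.succ) * S.A x (idx 0))

private def covDIterAux (S : GaugeSetting M d N G) :
    ∀ (m r : ℕ), GTensorField M d r N → GTensorField M d (r + m) N
  | 0, _, T => T
  | m + 1, r, T => S.covD (S.covDIterAux m r T)

/-- Iterated gauge covariant derivative `𝒟^m`. -/
def covDIter (S : GaugeSetting M d N G) (m : ℕ) {r : ℕ} (T : GTensorField M d r N) :
    GTensorField M d (r + m) N :=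
  S.covDIterAux m r T

/-- The directional gauge covariant derivative `D_A = ℓ^μ 𝒟_μ` on frame components. -/
def DA [NeZero d] (S : GaugeSetting M d N G) {r : ℕ} (T : GTensorField M d r N) :
    GTensorField M d r N :=
  fun x idx => S.covD T x (Fin.cons 0 idx)

/-- A gauge covariant quantity `T` is `k`-balanced: only its boost weight `b < -k`
parts `T_(b)` are possibly nonvanishing and they satisfy `D_A^{-b-k} T_(b) = 0`
(the frame being parallelly propagated along the affinely parameterized `ℓ`). -/
def IsBalanced [NeZero d] (S : GaugeSetting M d N G) (k : ℕ) {r : ℕ}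
    (T : GTensorField M d r N) : Prop :=
  ∀ b : ℤ,
    (-(k : ℤ) ≤ b → bwPart b T = fun _ _ => 0) ∧
      (b < -(k : ℤ) → (fun U => S.DA U)^[(-b - k).toNat] (bwPart b T) = fun _ _ => 0)

end GaugeSetting

/-- Antisymmetry of a rank-2 gauge covariant field. -/
def IsAntisymm2 {M : Type} {d N : ℕ} (F : GTensorField M d 2 N) : Prop :=
  ∀ x (a b : Fin d), F x ![a, b] = -F x ![b, a]

/-- Bianchi identity `𝒟_μ F_{νρ} + 𝒟_ν F_{ρμ} + 𝒟_ρ F_{μν} = 0` (frame components). -/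
def BianchiId {M : Type} {d N : ℕ} {G : Spacetime M d} (S : GaugeSetting M d N G)
    (F : GTensorField M d 2 N) : Prop :=
  ∀ x (a b c : Fin d),
    S.covD F x ![a, b, c] + S.covD F x ![b, c, a] + S.covD F x ![c, a, b] = 0

/-- The source-free Yang–Mills equation `𝒟^μ F_{μν} = 0` (frame components). -/
def YangMillsEq {M : Type} {d N : ℕ} {G : Spacetime M d} (S : GaugeSetting M d N G)
    (F : GTensorField M d 2 N) : Prop :=
  ∀ x (c : Fin d), (∑ a : Fin d, ∑ b : Fin d, eta d a b • S.covD F x ![a, b, c]) = 0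

/-- A gauge field together with its field strength (curvature)
`F_{μν} = ∇_μ A_ν - ∇_ν A_μ - i [A_μ, A_ν]`: `F` is antisymmetric and satisfies the
Bianchi identity. -/
structure FieldStrength (M : Type) (d N : ℕ) (G : Spacetime M d)
    extends GaugeSetting M d N G where
  /-- frame components of the field strength -/
  F : GTensorField M d 2 N
  antisymm : IsAntisymm2 F
  bianchi : BianchiId toGaugeSetting F

/-- The Hodge dual `⋆F` of a rank-2 gauge covariant field. -/
def hodge {M : Type} {d N : ℕ} (F : GTensorField M d 2 N) : GTensorField M d (d - 2) N :=
  fun x idx =>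
    (2 : ℂ)⁻¹ •
      ∑ b : Fin d, ∑ c : Fin d, ∑ b' : Fin d, ∑ c' : Fin d,
        (leviCivita d (fun j => if h : (j : ℕ) < d - 2 then idx ⟨j, h⟩
            else if (j : ℕ) = d - 2 then b else c) * eta d b b' * eta d c c') • F x ![b', c']

/-- Formal polynomial expressions built from a rank-`r₀` gauge covariant base field,
its gauge covariant derivatives, the metric and the volume element, by tensor
products, metric contractions and index permutations.  The three indices record
(rank, derivative order, polynomial degree in the base field). -/
inductive GExpr (d r₀ : ℕ) : ℕ → ℕ → ℕ → Type where
  | base : GExpr d r₀ r₀ 0 1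
  | deriv : ∀ {r k p : ℕ}, GExpr d r₀ r k p → GExpr d r₀ (r + 1) (k + 1) p
  | mul : ∀ {r s k l p q : ℕ},
      GExpr d r₀ r k p → GExpr d r₀ s l q → GExpr d r₀ (r + s) (max k l) (p + q)
  | contr : ∀ {r k p : ℕ}, GExpr d r₀ (r + 2) k p → GExpr d r₀ r k p
  | perm : ∀ {r k p : ℕ}, Equiv.Perm (Fin r) → GExpr d r₀ r k p → GExpr d r₀ r k p
  | eps : GExpr d r₀ d 0 0
  | metric : GExpr d r₀ 2 0 0

/-- Evaluation of a formal expression on a gauge covariant base field `T₀`, using the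
gauge covariant derivative of the gauge field `S`. -/
def GExpr.eval {M : Type} {d r₀ N : ℕ} {G : Spacetime M d} (S : GaugeSetting M d N G)
    (T₀ : GTensorField M d r₀ N) :
    ∀ {r k p : ℕ}, GExpr d r₀ r k p → GTensorField M d r N
  | _, _, _, .base => T₀
  | _, _, _, .deriv e => S.covD (GExpr.eval S T₀ e)
  | _, _, _, .mul e₁ e₂ => gprod (GExpr.eval S T₀ e₁) (GExpr.eval S T₀ e₂)
  | _, _, _, .contr e => contr2 (GExpr.eval S T₀ e)
  | _, _, _, .perm σ e => permIdx σ (GExpr.eval S T₀ e)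
  | _, _, _, .eps => fun _ idx => leviCivita d idx • 1
  | _, _, _, .metric => fun _ idx => eta d (idx 0) (idx 1) • 1

/-- Evaluation of a formal expression on an ordinary tensor base field, using the
covariant derivative `∇`. -/
def GExpr.evalT {M : Type} {d r₀ : ℕ}
    (nR : ∀ (r : ℕ), TensorField M d r → TensorField M d (r + 1))
    (T₀ : TensorField M d r₀) :
    ∀ {r k p : ℕ}, GExpr d r₀ r k p → TensorField M d r
  | _, _, _, .base => T₀
  | _, _, _, .deriv e => nR _ (GExpr.evalT nR T₀ e)
  | _, _, _, .mul e₁ e₂ => tensProd (GExpr.evalT nR T₀ e₁) (GExpr.evalT nR T₀ e₂)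
  | _, _, _, .contr e => tcontr2 (GExpr.evalT nR T₀ e)
  | _, _, _, .perm σ e => fun x idx => GExpr.evalT nR T₀ e x (idx ∘ σ)
  | _, _, _, .eps => fun _ idx => leviCivita d idx
  | _, _, _, .metric => fun _ idx => eta d (idx 0) (idx 1)

/-- The scalar polynomial gauge invariant `Tr 𝒫(T₀, 𝒟T₀, …)` attached to a rank-0
expression. -/
def scalarInvariant {M : Type} {d r₀ N k p : ℕ} {G : Spacetime M d}
    (S : GaugeSetting M d N G) (T₀ : GTensorField M d r₀ N) (e : GExpr d r₀ 0 k p) :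
    M → ℂ :=
  fun x => Matrix.trace (GExpr.eval S T₀ e x (fun i => i.elim0))

/-- `T₀` is `VSI_k`: every scalar polynomial gauge invariant constructed from `T₀` and
its gauge covariant derivatives up to order `k` (the metric and volume element being
allowed in the construction) vanishes. -/
def IsVSIk {M : Type} {d r₀ N : ℕ} {G : Spacetime M d} (S : GaugeSetting M d N G)
    (T₀ : GTensorField M d r₀ N) (k : ℕ) : Prop :=
  ∀ (k' p : ℕ), k' ≤ k → 1 ≤ p → ∀ e : GExpr d r₀ 0 k' p, ∀ x,
    scalarInvariant S T₀ e x = 0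

/-- `T₀` is `VSI`: it is `VSI_k` for every `k`. -/
def IsVSI {M : Type} {d r₀ N : ℕ} {G : Spacetime M d} (S : GaugeSetting M d N G)
    (T₀ : GTensorField M d r₀ N) : Prop :=
  ∀ k : ℕ, IsVSIk S T₀ k

/-- `T₀` is `CSI`: every scalar polynomial gauge invariant constructed from `T₀` and its
gauge covariant derivatives of arbitrary order is constant. -/
def IsCSI {M : Type} {d r₀ N : ℕ} {G : Spacetime M d} (S : GaugeSetting M d N G)
    (T₀ : GTensorField M d r₀ N) : Prop :=
  ∀ (k p : ℕ), 1 ≤ p → ∀ e : GExpr d r₀ 0 k p, ∀ x y,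
    scalarInvariant S T₀ e x = scalarInvariant S T₀ e y

/-- An ordinary tensor field `T₀` is `VSI_k`: all its scalar polynomial invariants
involving covariant derivatives up to order `k` vanish. -/
def IsTensorVSIk {M : Type} {d r₀ : ℕ}
    (nR : ∀ (r : ℕ), TensorField M d r → TensorField M d (r + 1))
    (T₀ : TensorField M d r₀) (k : ℕ) : Prop :=
  ∀ (k' p : ℕ), k' ≤ k → 1 ≤ p → ∀ e : GExpr d r₀ 0 k' p, ∀ x,
    GExpr.evalT nR T₀ e x (fun i => i.elim0) = 0

/-- A field strength `F` is `k`-universal: every Lie-algebra valued 1-form constructed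
polynomially from `F` and its gauge covariant derivatives up to order `k` (the metric
and the volume element being allowed) that is at least quadratic in `F` or contains a
gauge covariant derivative of `F` vanishes identically. -/
def IsKUniversal {M : Type} {d N : ℕ} {G : Spacetime M d} (S : GaugeSetting M d N G)
    (F : GTensorField M d 2 N) (k : ℕ) : Prop :=
  ∀ (k' p : ℕ), k' ≤ k → (2 ≤ p ∨ 1 ≤ k') → ∀ e : GExpr d 2 1 k' p, ∀ x idx,
    GExpr.eval S F e x idx = 0

/-- A field strength is universal iff it is `k`-universal for every `k`. -/
def IsUniversal {M : Type} {d N : ℕ} {G : Spacetime M d} (S : GaugeSetting M d N G)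
    (F : GTensorField M d 2 N) : Prop :=
  ∀ k : ℕ, IsKUniversal S F k

end

/-! A product adds boost weights and contractions with the metric only pair indices of
opposite boost weight, while the metric and the volume element have boost weight `0`.  Hence an
algebraic expression of degree `p` in a field of boost order `≤ β` has boost order `≤ p β`.
For a null field (`β = -1`) of degree `p ≥ 2` this is below `-1`, the least boost weight a
single index can carry, so every such 1-form vanishes; the Yang–Mills equation makes the
left-hand side of the corrected field equation vanish as well. -/

def frameBoostWeight {d : ℕ} (a : Fin d) : ℤ :=
  if (a : ℕ) = 0 then 1 else if (a : ℕ) = 1 then -1 else 0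

lemma boostWeight_eq_sum {d r : ℕ} (idx : Fin r → Fin d) :
    boostWeight idx = ∑ i, frameBoostWeight (idx i) := by
  unfold boostWeight frameBoostWeight
  rw [Finset.card_filter, Finset.card_filter]
  push_cast
  rw [← Finset.sum_sub_distrib]
  refine Finset.sum_congr rfl fun i _ => ?_
  split_ifs <;> omega

lemma boostWeight_cons {d r : ℕ} (a : Fin d) (idx : Fin r → Fin d) :
    boostWeight (Fin.cons a idx : Fin (r + 1) → Fin d) = frameBoostWeight a + boostWeight idx := by
  simp [boostWeight_eq_sum, Fin.sum_univ_succ]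

lemma boostWeight_eq_add {d r s : ℕ} (idx : Fin (r + s) → Fin d) :
    boostWeight idx = boostWeight (fun i => idx (Fin.castAdd s i)) +
      boostWeight (fun j => idx (Fin.natAdd r j)) := by
  simp [boostWeight_eq_sum, Fin.sum_univ_add]

lemma boostWeight_comp_perm {d r : ℕ} (σ : Equiv.Perm (Fin r)) (idx : Fin r → Fin d) :
    boostWeight (idx ∘ σ) = boostWeight idx := by
  simpa only [boostWeight_eq_sum, Function.comp_apply] using
    Equiv.sum_comp σ fun i => frameBoostWeight (idx i)

lemma neg_le_boostWeight {d r : ℕ} (idx : Fin r → Fin d) : -(r : ℤ) ≤ boostWeight idx := by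
  have h := Finset.card_le_univ (Finset.univ.filter fun i => (idx i : ℕ) = 1)
  rw [Fintype.card_fin] at h
  unfold boostWeight
  omega

lemma eta_eq_zero_of_add_ne_zero {d : ℕ} {a b : Fin d}
    (h : frameBoostWeight a + frameBoostWeight b ≠ 0) : eta d a b = 0 := by
  unfold eta
  unfold frameBoostWeight at h
  split_ifs with h₁ h₂
  · rcases h₁ with ⟨_, _⟩ | ⟨_, _⟩ <;> split_ifs at h <;> omega
  · obtain ⟨rfl, _⟩ := h₂
    split_ifs at h <;> omega
  · rfl

/-- A bijective index list contains exactly one `ℓ` and one `n` index. -/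
lemma leviCivita_eq_zero_of_boostWeight_ne_zero {d : ℕ} (hd : 2 ≤ d) {idx : Fin d → Fin d}
    (h : boostWeight idx ≠ 0) : leviCivita d idx = 0 := by
  unfold leviCivita
  split_ifs with hbij
  · have hfiber : ∀ c : Fin d,
        (Finset.univ.filter fun i => (idx i : ℕ) = (c : ℕ)).card = 1 := by
      intro c
      rw [Finset.card_eq_one]
      refine ⟨(Equiv.ofBijective idx hbij).symm c, Finset.ext fun i => ?_⟩
      simp only [Finset.mem_filter, Finset.mem_singleton, Finset.mem_univ, true_and,
        ← Fin.ext_iff, Equiv.eq_symm_apply]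
      rfl
    have h₀ := hfiber ⟨0, by omega⟩
    have h₁ := hfiber ⟨1, by omega⟩
    exact absurd (by unfold boostWeight; rw [h₀, h₁]; rfl) h
  · rfl

namespace GTensorField.BoostOrderLE

variable {M : Type} {d N : ℕ}

lemma eq_zero_of_lt_neg_rank {r : ℕ} {T : GTensorField M d r N} {b : ℤ}
    (hT : T.BoostOrderLE b) (hb : b < -(r : ℤ)) (x : M) (idx : Fin r → Fin d) :
    T x idx = 0 :=
  hT x idx (hb.trans_le (neg_le_boostWeight idx))

lemma gprod {r s : ℕ} {T : GTensorField M d r N} {U : GTensorField M d s N} {b c : ℤ}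
    (hT : T.BoostOrderLE b) (hU : U.BoostOrderLE c) : (gprod T U).BoostOrderLE (b + c) := by
  intro x idx hidx
  rw [boostWeight_eq_add] at hidx
  by_cases h : b < boostWeight fun i => idx (Fin.castAdd s i)
  · exact (congrArg (· * _) (hT x _ h)).trans (Matrix.zero_mul _)
  · exact (congrArg (_ * ·) (hU x _ (by omega))).trans (Matrix.mul_zero _)

lemma contr2 {r : ℕ} {T : GTensorField M d (r + 2) N} {b : ℤ} (hT : T.BoostOrderLE b) :
    (contr2 T).BoostOrderLE b := by
  intro x idx hidx
  refine Finset.sum_eq_zero fun a _ => Finset.sum_eq_zero fun c _ => ?_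
  by_cases hac : frameBoostWeight a + frameBoostWeight c = 0
  · rw [hT x _ (by rw [boostWeight_cons, boostWeight_cons]; omega), smul_zero]
  · rw [eta_eq_zero_of_add_ne_zero hac, zero_smul]

lemma permIdx {r : ℕ} {T : GTensorField M d r N} {b : ℤ} (hT : T.BoostOrderLE b)
    (σ : Equiv.Perm (Fin r)) : (permIdx σ T).BoostOrderLE b :=
  fun x idx hidx => hT x (idx ∘ σ) (by rwa [boostWeight_comp_perm])

end GTensorField.BoostOrderLE

lemma GExpr.eval_boostOrderLE {M : Type} {d r₀ N : ℕ} {G : Spacetime M d} (hd : 2 ≤ d)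
    (S : GaugeSetting M d N G) {T₀ : GTensorField M d r₀ N} {β : ℤ}
    (hT₀ : T₀.BoostOrderLE β) {r k p : ℕ} (e : GExpr d r₀ r k p) (hk : k = 0) :
    (e.eval S T₀).BoostOrderLE (p * β) := by
  induction e with
  | base => rw [Nat.cast_one, one_mul]; exact hT₀
  | deriv e ih => omega
  | mul e₁ e₂ ih₁ ih₂ =>
    rw [Nat.cast_add, add_mul]
    exact (ih₁ (by omega)).gprod (ih₂ (by omega))
  | contr e ih => exact (ih hk).contr2
  | perm σ e ih => exact (ih hk).permIdx σ
  | eps =>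
    intro x idx hidx
    show leviCivita d idx • (1 : Matrix (Fin N) (Fin N) ℂ) = 0
    rw [leviCivita_eq_zero_of_boostWeight_ne_zero hd (by simp only [Nat.cast_zero, zero_mul] at hidx; omega), zero_smul]
  | metric =>
    intro x idx hidx
    show eta d (idx 0) (idx 1) • (1 : Matrix (Fin N) (Fin N) ℂ) = 0
    rw [boostWeight_eq_sum, Fin.sum_univ_two] at hidx
    rw [eta_eq_zero_of_add_ne_zero (by simp only [Nat.cast_zero, zero_mul] at hidx; omega), zero_smul]

/-- Every null Yang–Mills field `F_{μν}` is `0`-universal: every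
Lie-algebra valued 1-form constructed polynomially from `F` and `⋆F` (the metric and
volume element being allowed, so Hodge duals are included) that is at least quadratic
in `F` vanishes identically.  Consequently, a null Yang–Mills field solves the field
equations of any gauge theory whose Lagrangian is the Yang–Mills Lagrangian plus an
analytic function of algebraic scalar gauge invariants of `F` and `⋆F` whose expansion
is at least cubic in `F`: the corrected field equation
`𝒟^μ F_{μν} = (correction 1-form)_ν` holds for every admissible correction, the
correction being an algebraic 1-form at least quadratic in `F`. -/
theorem null_YangMills_field_is_0universal
    {M : Type} {d N : ℕ} [NeZero d] (hd : 4 ≤ d)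
    (G : Spacetime M d) (FS : FieldStrength M d N G)
    (hYM : YangMillsEq FS.toGaugeSetting FS.F)
    (hnull : FS.F.IsNull) :
    IsKUniversal FS.toGaugeSetting FS.F 0 ∧
      ∀ (p : ℕ), 2 ≤ p → ∀ e : GExpr d 2 1 0 p, ∀ x (c : Fin d),
        (∑ a : Fin d, ∑ b : Fin d, eta d a b • FS.toGaugeSetting.covD FS.F x ![a, b, c]) =
          GExpr.eval FS.toGaugeSetting FS.F e x (fun _ => c) := by
  have hvanish : ∀ p, 2 ≤ p → ∀ e : GExpr d 2 1 0 p, ∀ x idx,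
      e.eval FS.toGaugeSetting FS.F x idx = 0 := fun p hp e =>
    (e.eval_boostOrderLE (by omega) FS.toGaugeSetting hnull rfl).eq_zero_of_lt_neg_rank
      (by push_cast; omega)
  refine ⟨fun k' p hk' hp e x idx => ?_, fun p hp e x c => ?_⟩
  · obtain rfl : k' = 0 := by omega
    exact hvanish p (hp.resolve_right (by omega)) e x idx
  · rw [hvanish p hp e x, hYM x c]
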